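/- Let c* > 0, let 0 < ε < 1/(2ω), and let α be a real number with 0 < α ≤ ε·(1−ωε). If Λ_ε ≤ c*/ε, then Λ_α ≤ c*/α. -/

import Mathlib

/-!
Write `Λ_ε = A - ε q` with `A = x² + y² + p + (2/κ)F²`. Then
`ε Λ_ε - α Λ_α = (ε - α) (A - (ε + α) q)`, so it suffices that `α ≤ ε` and `(ε + α) q ≤ A`.
By AM-GM the coupling term costs at most half of `y²`, so `A ≥ (x² + y²)/2`, while
`q ≤ ω (x² + y²)/2`; the choice `α ≤ ε(1 - ωε)` is exactly what makes `ω (ε + α) ≤ 1`.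
-/

lemma two_div_sqrt_mul_mul_le {κ : ℝ} (hκ : 0 < κ) (F y : ℝ) :
    2 / √κ * F * y ≤ y ^ 2 / 2 + 2 / κ * F ^ 2 := by
  have hF : 2 / κ * F ^ 2 = 2 * (F / √κ) ^ 2 := by
    rw [div_pow, Real.sq_sqrt hκ.le]; ring
  have hFy : 2 / √κ * F * y = 2 * (F / √κ) * y := by ring
  rw [hF, hFy]
  nlinarith [sq_nonneg (y - 2 * (F / √κ))]

lemma mul_sub_mul_le_mul_sub_mul {A q α ε : ℝ} (hαε : α ≤ ε) (hq : (ε + α) * q ≤ A) :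
    α * (A - α * q) ≤ ε * (A - ε * q) := by
  have key : ε * (A - ε * q) - α * (A - α * q) = (ε - α) * (A - (ε + α) * q) := by ring
  rw [← sub_nonneg, key]
  exact mul_nonneg (sub_nonneg.mpr hαε) (sub_nonneg.mpr hq)

lemma le_of_le_mul_one_sub_mul {ω ε α : ℝ} (hω : 0 ≤ ω) (hε : 0 < ε)
    (hαε : α ≤ ε * (1 - ω * ε)) : α ≤ ε := by
  nlinarith [mul_nonneg hω (mul_nonneg hε.le hε.le)]

lemma mul_add_le_one_of_le_mul_one_sub_mul {ω ε α : ℝ} (hε : 0 < ε) (hα : 0 < α)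
    (hαε : α ≤ ε * (1 - ω * ε)) : ω * (ε + α) ≤ 1 := by
  have hωε : ω * ε < 1 := by nlinarith
  nlinarith [mul_pos hε hα, sq_nonneg (1 - ω * ε)]

theorem stmt12_general (ω κ F x y p q : ℝ)
    (hω : 1 ≤ ω) (hκ : 0 < κ)
    (hp : |p| ≤ (2 / Real.sqrt κ) * F * y) (hq : |q| ≤ ω * x * y)
    (Λ : ℝ → ℝ)
    (hΛ : ∀ ε : ℝ, Λ ε = x ^ 2 + y ^ 2 + p + (2 / κ) * F ^ 2 - ε * q)
    (cstar : ℝ)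
    (ε : ℝ) (hε0 : 0 < ε)
    (α : ℝ) (hα0 : 0 < α) (hα1 : α ≤ ε * (1 - ω * ε))
    (h : Λ ε ≤ cstar / ε) :
    Λ α ≤ cstar / α := by
  set S := x ^ 2 + y ^ 2
  set A := S + p + (2 / κ) * F ^ 2
  have hω0 : 0 ≤ ω := zero_le_one.trans hω
  have hA : S / 2 ≤ A := by
    nlinarith [neg_abs_le p, two_div_sqrt_mul_mul_le hκ F y, sq_nonneg x]
  have hqS : q ≤ ω * S / 2 := by
    nlinarith [le_abs_self q, mul_le_mul_of_nonneg_left (two_mul_le_add_sq x y) hω0]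
  have hstep := mul_add_le_one_of_le_mul_one_sub_mul hε0 hα0 hα1
  have hqA : (ε + α) * q ≤ A := calc
    (ε + α) * q ≤ (ε + α) * (ω * S / 2) := by gcongr
    _ = ω * (ε + α) * (S / 2) := by ring
    _ ≤ S / 2 := mul_le_of_le_one_left (by positivity) hstep
    _ ≤ A := hA
  rw [hΛ, le_div_iff₀ hα0, mul_comm]
  rw [hΛ, le_div_iff₀ hε0, mul_comm] at h
  exact (mul_sub_mul_le_mul_sub_mul (le_of_le_mul_one_sub_mul hω0 hε0 hα1) hqA).trans h

/-- Nesting of the invariant sets: if `0 < α ≤ ε(1-ωε)` and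
`Λ_ε ≤ c*/ε`, then `Λ_α ≤ c*/α`. -/
theorem stmt12 (ω κ F x y p q : ℝ)
    (hω : 1 ≤ ω) (hκ : 0 < κ) (hF : 0 ≤ F) (hx : 0 ≤ x) (hy : 0 ≤ y)
    (hp : |p| ≤ (2 / Real.sqrt κ) * F * y) (hq : |q| ≤ ω * x * y)
    (Λ : ℝ → ℝ)
    (hΛ : ∀ ε : ℝ, Λ ε = x ^ 2 + y ^ 2 + p + (2 / κ) * F ^ 2 - ε * q)
    (cstar : ℝ) (hcstar : 0 < cstar)
    (ε : ℝ) (hε0 : 0 < ε) (hε1 : ε < 1 / (2 * ω))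
    (α : ℝ) (hα0 : 0 < α) (hα1 : α ≤ ε * (1 - ω * ε))
    (h : Λ ε ≤ cstar / ε) :
    Λ α ≤ cstar / α :=
  stmt12_general ω κ F x y p q hω hκ hp hq Λ hΛ cstar ε hε0 α hα0 hα1 h
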